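/- arXiv:1506.08405 — 2 statements merged into one kernel-verified Lean document; each statement's English description precedes it below -/
import Mathlib

section
/- Define a_n ∈ ℕ for n ≥ 0 by a_0 = 1, a_1 = 0, and a_n = binom(2n−2, n) for n ≥ 2. Then for every real number k with 0 ≤ k < 1/2, the series Σ_{n=0}^{∞} a_n·(k(1−k))ⁿ converges with sum (1 − k)² / (1 − 2k). -/
open Finset

-- cast abbreviations
private noncomputable def cb (n : ℕ) : ℝ := (Nat.centralBinom n : ℝ)
private noncomputable def ct (n : ℕ) : ℝ := (catalan n : ℝ)

private lemma cb_nonneg (n : ℕ) : 0 ≤ cb n := Nat.cast_nonneg _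
private lemma ct_nonneg (n : ℕ) : 0 ≤ ct n := Nat.cast_nonneg _
private lemma cb_zero : cb 0 = 1 := by simp [cb]
private lemma ct_zero : ct 0 = 1 := by simp [ct]

private lemma cb_succ (n : ℕ) : ((n : ℝ) + 1) * cb (n + 1) = (4 * n + 2) * cb n := by
  have h := Nat.succ_mul_centralBinom_succ n
  have : ((n + 1) * Nat.centralBinom (n + 1) : ℝ) = (2 * (2 * n + 1) * Nat.centralBinom n : ℝ) := by
    exact_mod_cast congrArg (Nat.cast : ℕ → ℝ) h
  push_cast at this
  unfold cb; linarith

private lemma cb_le_four_pow (n : ℕ) : cb n ≤ 4 ^ n := by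
  have h1 : Nat.centralBinom n ≤ (2 * n + 1).choose n :=
    Nat.choose_le_choose n (by omega)
  have h2 := Nat.choose_middle_le_pow n
  unfold cb
  exact_mod_cast le_trans h1 h2

private lemma ct_le_cb (n : ℕ) : ct n ≤ cb n := by
  unfold ct cb
  have h := succ_mul_catalan_eq_centralBinom n
  exact_mod_cast le_trans (Nat.le_mul_of_pos_left _ (by omega)) h.le

/-- weighted reflection: for a symmetric g, 2∑ i·g i = m·∑ g -/
private lemma reflect_weight (g : ℕ → ℝ) (m : ℕ) (hg : ∀ i ≤ m, g (m - i) = g i) :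
    2 * (∑ i ∈ range (m + 1), (i : ℝ) * g i) = m * ∑ i ∈ range (m + 1), g i := by
  have h := Finset.sum_range_reflect (fun i => (i : ℝ) * g i) (m + 1)
  have h2 : ∑ j ∈ range (m + 1), ((m : ℝ) - j) * g j
      = ∑ i ∈ range (m + 1), (i : ℝ) * g i := by
    rw [← h]
    apply Finset.sum_congr rfl
    intro j hj
    have hj' : j ≤ m := by simpa [Nat.lt_succ_iff] using hj
    have : m + 1 - 1 - j = m - j := by omega
    rw [this, hg j hj']
    have : ((m - j : ℕ) : ℝ) = (m : ℝ) - j := by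
      push_cast [Nat.cast_sub hj']; ring
    rw [this]
  have h3 : ∑ j ∈ range (m + 1), ((m : ℝ) - j) * g j
      = m * (∑ i ∈ range (m + 1), g i) - ∑ i ∈ range (m + 1), (i : ℝ) * g i := by
    rw [Finset.mul_sum, ← Finset.sum_sub_distrib]
    apply Finset.sum_congr rfl; intro j _; ring
  linarith [h2, h3]

private lemma cb_conv : ∀ n : ℕ, ∑ i ∈ range (n + 1), cb i * cb (n - i) = 4 ^ n := by
  intro n
  induction n with
  | zero => simp [cb, Nat.centralBinom]
  | succ n IH =>
    set g : ℕ → ℝ := fun i => cb i * cb (n + 1 - i) with hgdef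
    have hgsym : ∀ i ≤ n + 1, g (n + 1 - i) = g i := by
      intro i hi
      simp only [hgdef]
      rw [Nat.sub_sub_self hi, mul_comm]
    set g' : ℕ → ℝ := fun i => cb i * cb (n - i) with hg'def
    have hg'sym : ∀ i ≤ n, g' (n - i) = g' i := by
      intro i hi
      simp only [hg'def]
      rw [Nat.sub_sub_self hi, mul_comm]
    -- B := ∑_{i∈range(n+2)} i * g i
    have hshift : ∑ i ∈ range (n + 2), (i : ℝ) * g i
        = ∑ j ∈ range (n + 1), ((4 * j + 2) : ℝ) * g' j := by
      rw [Finset.sum_range_succ' (fun i => (i : ℝ) * g i) (n + 1)]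
      simp only [Nat.cast_zero, zero_mul, add_zero]
      apply Finset.sum_congr rfl
      intro j hj
      simp only [hgdef, hg'def]
      have h1 : n + 1 - (j + 1) = n - j := by omega
      rw [h1]
      have hcs := cb_succ j
      push_cast
      linear_combination cb (n - j) * hcs
    have hrefl1 : 2 * (∑ i ∈ range (n + 2), (i : ℝ) * g i)
        = ((n : ℝ) + 1) * ∑ i ∈ range (n + 2), g i := by
      have h := reflect_weight g (n + 1) hgsym
      push_cast at h
      convert h using 2
    have hrefl2 : 2 * (∑ i ∈ range (n + 1), (i : ℝ) * g' i)
        = n * ∑ i ∈ range (n + 1), g' i := reflect_weight g' n hg'sym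
    have hB : ∑ j ∈ range (n + 1), ((4 * j + 2) : ℝ) * g' j
        = 4 * (∑ i ∈ range (n + 1), (i : ℝ) * g' i) + 2 * ∑ i ∈ range (n + 1), g' i := by
      rw [Finset.mul_sum, Finset.mul_sum, ← Finset.sum_add_distrib]
      apply Finset.sum_congr rfl; intro j _; ring
    have hS : ∑ i ∈ range (n + 1), g' i = 4 ^ n := IH
    -- combine : (n+1) * T = 2*B = 2*(2n*4^n + 2*4^n)
    have key : ((n : ℝ) + 1) * (∑ i ∈ range (n + 2), g i) = ((n : ℝ) + 1) * 4 ^ (n + 1) := by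
      have : ((n : ℝ) + 1) * (∑ i ∈ range (n + 2), g i)
          = 2 * (∑ i ∈ range (n + 2), (i : ℝ) * g i) := by
        push_cast at hrefl1 ⊢; linarith
      rw [this, hshift, hB, hS]
      have h2J : 2 * (∑ i ∈ range (n + 1), (i : ℝ) * g' i) = n * 4 ^ n := by rw [hrefl2, hS]
      linear_combination 4 * h2J
    have hne : ((n : ℝ) + 1) ≠ 0 := by positivity
    exact mul_left_cancel₀ hne key

private lemma ct_conv (n : ℕ) : ct (n + 1) = ∑ i ∈ range (n + 1), ct i * ct (n - i) := by
  unfold ct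
  rw [catalan_succ' n]
  rw [Finset.Nat.sum_antidiagonal_eq_sum_range_succ (fun i j => catalan i * catalan j) n]
  push_cast
  rfl

/-- finite Cauchy inequality for nonnegative sequences -/
private lemma cauchy_sq_le (g : ℕ → ℝ) (hg : ∀ n, 0 ≤ g n) (M : ℕ) :
    ∑ n ∈ range M, ∑ i ∈ range (n + 1), g i * g (n - i) ≤ (∑ i ∈ range M, g i) ^ 2 := by
  have hdisj : Set.PairwiseDisjoint ↑(range M) (fun n => Finset.HasAntidiagonal.antidiagonal (n : ℕ)) := by
    intro a _ b _ hab
    simp only [Finset.disjoint_left]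
    intro p hpa hpb
    rw [Finset.HasAntidiagonal.mem_antidiagonal] at hpa hpb
    exact hab (hpa ▸ hpb ▸ rfl)
  have h1 : ∑ n ∈ range M, ∑ i ∈ range (n + 1), g i * g (n - i)
      = ∑ p ∈ (range M).biUnion (fun n => Finset.HasAntidiagonal.antidiagonal n), g p.1 * g p.2 := by
    rw [Finset.sum_biUnion hdisj]
    apply Finset.sum_congr rfl
    intro n _
    rw [Finset.Nat.sum_antidiagonal_eq_sum_range_succ (fun i j => g i * g j) n]
  rw [h1, sq, Finset.sum_mul_sum, ← Finset.sum_product']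
  apply Finset.sum_le_sum_of_subset_of_nonneg
  · intro p hp
    simp only [Finset.mem_biUnion, Finset.mem_range, Finset.HasAntidiagonal.mem_antidiagonal] at hp
    obtain ⟨n, hn, hpn⟩ := hp
    simp only [Finset.mem_product, Finset.mem_range]
    omega
  · intro p _ _
    exact mul_nonneg (hg _) (hg _)

/-- With `a_n = C(2n−2, n)` (natural-number truncated subtraction,
so `a_0 = 1`, `a_1 = 0`), for every real `k` with `0 ≤ k < 1/2`:
`Σ_{n≥0} a_n (k(1−k))ⁿ = (1−k)²/(1−2k)`. -/
theorem statement6 (k : ℝ) (hk0 : 0 ≤ k) (hk1 : k < 1 / 2) :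
    HasSum (fun n : ℕ => (Nat.choose (2 * n - 2) n : ℝ) * (k * (1 - k)) ^ n)
      ((1 - k) ^ 2 / (1 - 2 * k)) := by
  set z : ℝ := k * (1 - k) with hzdef
  have hk2 : 0 < 1 - 2 * k := by linarith
  have hk3 : 0 < 1 - k := by linarith
  have hz0 : 0 ≤ z := by positivity
  have hz4 : 4 * z < 1 := by nlinarith
  -- summability
  have hzn : ∀ n : ℕ, 0 ≤ z ^ n := fun n => pow_nonneg hz0 n
  have hsumgeo : Summable (fun n : ℕ => (4 * z) ^ n) :=
    summable_geometric_of_lt_one (by linarith) hz4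
  have hCsummable : Summable (fun n : ℕ => cb n * z ^ n) := by
    apply Summable.of_nonneg_of_le (fun n => mul_nonneg (cb_nonneg n) (hzn n)) _ hsumgeo
    intro n
    rw [mul_pow 4 z n]
    exact mul_le_mul_of_nonneg_right (cb_le_four_pow n) (hzn n)
  have hKsummable : Summable (fun n : ℕ => ct n * z ^ n) := by
    apply Summable.of_nonneg_of_le (fun n => mul_nonneg (ct_nonneg n) (hzn n)) _ hsumgeo
    intro n
    rw [mul_pow 4 z n]
    exact mul_le_mul_of_nonneg_right (le_trans (ct_le_cb n) (cb_le_four_pow n)) (hzn n)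
  have hCnorm : Summable (fun n : ℕ => ‖cb n * z ^ n‖) := by
    have : (fun n : ℕ => ‖cb n * z ^ n‖) = fun n => cb n * z ^ n := by
      funext n; exact Real.norm_of_nonneg (mul_nonneg (cb_nonneg n) (hzn n))
    rw [this]; exact hCsummable
  have hKnorm : Summable (fun n : ℕ => ‖ct n * z ^ n‖) := by
    have : (fun n : ℕ => ‖ct n * z ^ n‖) = fun n => ct n * z ^ n := by
      funext n; exact Real.norm_of_nonneg (mul_nonneg (ct_nonneg n) (hzn n))
    rw [this]; exact hKsummable
  set C : ℝ := ∑' n, cb n * z ^ n with hCdef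
  set K : ℝ := ∑' n, ct n * z ^ n with hKdef
  -- inner convolution rewriting
  have hconvC : ∀ n : ℕ, ∑ i ∈ range (n + 1), (cb i * z ^ i) * (cb (n - i) * z ^ (n - i))
      = (4 * z) ^ n := by
    intro n
    have : ∀ i ∈ range (n + 1), (cb i * z ^ i) * (cb (n - i) * z ^ (n - i))
        = (cb i * cb (n - i)) * z ^ n := by
      intro i hi
      have hi' : i ≤ n := by simpa [Nat.lt_succ_iff] using hi
      have hzz : z ^ i * z ^ (n - i) = z ^ n := by
        rw [← pow_add]; congr 1; omega
      calc (cb i * z ^ i) * (cb (n - i) * z ^ (n - i))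
          = (cb i * cb (n - i)) * (z ^ i * z ^ (n - i)) := by ring
        _ = (cb i * cb (n - i)) * z ^ n := by rw [hzz]
    rw [Finset.sum_congr rfl this, ← Finset.sum_mul, cb_conv n, mul_pow 4 z n]
  have hconvK : ∀ n : ℕ, ∑ i ∈ range (n + 1), (ct i * z ^ i) * (ct (n - i) * z ^ (n - i))
      = ct (n + 1) * z ^ n := by
    intro n
    have : ∀ i ∈ range (n + 1), (ct i * z ^ i) * (ct (n - i) * z ^ (n - i))
        = (ct i * ct (n - i)) * z ^ n := by
      intro i hi
      have hi' : i ≤ n := by simpa [Nat.lt_succ_iff] using hi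
      have hzz : z ^ i * z ^ (n - i) = z ^ n := by
        rw [← pow_add]; congr 1; omega
      calc (ct i * z ^ i) * (ct (n - i) * z ^ (n - i))
          = (ct i * ct (n - i)) * (z ^ i * z ^ (n - i)) := by ring
        _ = (ct i * ct (n - i)) * z ^ n := by rw [hzz]
    rw [Finset.sum_congr rfl this, ← Finset.sum_mul, ← ct_conv n]
  -- C = 1/(1-2k)
  have hCC : C * C = (1 - 4 * z)⁻¹ := by
    rw [hCdef, tsum_mul_tsum_eq_tsum_sum_range_of_summable_norm hCnorm hCnorm]
    rw [tsum_congr hconvC, tsum_geometric_of_lt_one (by linarith) hz4]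
  have hCval : C = (1 - 2 * k)⁻¹ := by
    have hC0 : 0 ≤ C := tsum_nonneg (fun n => mul_nonneg (cb_nonneg n) (hzn n))
    have hz14 : (1 - 4 * z) = (1 - 2 * k) ^ 2 := by rw [hzdef]; ring
    have hfac : (C - (1 - 2 * k)⁻¹) * (C + (1 - 2 * k)⁻¹) = 0 := by
      have h2 : C * C = ((1 - 2 * k)⁻¹) ^ 2 := by
        rw [hCC, hz14]; rw [← inv_pow]
      nlinarith [h2]
    rcases mul_eq_zero.mp hfac with h | h
    · linarith
    · have : (0 : ℝ) < (1 - 2 * k)⁻¹ := by positivity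
      linarith
  -- z * K^2 = K - 1
  have hKK : K * K = ∑' n : ℕ, ct (n + 1) * z ^ n := by
    rw [hKdef, tsum_mul_tsum_eq_tsum_sum_range_of_summable_norm hKnorm hKnorm]
    exact tsum_congr hconvK
  have hshiftsum : HasSum (fun n : ℕ => ct (n + 1) * z ^ (n + 1)) (K - 1) := by
    apply (hasSum_nat_add_iff (f := fun n => ct n * z ^ n) 1).mpr
    have h0 : ∑ i ∈ range 1, ct i * z ^ i = 1 := by simp [ct_zero]
    rw [h0, sub_add_cancel]
    exact hKsummable.hasSum
  have hquad : z * (K * K) = K - 1 := by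
    rw [hKK, ← tsum_mul_left]
    rw [← hshiftsum.tsum_eq]
    apply tsum_congr
    intro n
    rw [pow_succ]
    ring
  -- K ≤ (1-k)⁻¹ via partial sums
  have hpartial : ∀ N : ℕ, ∑ n ∈ range N, ct n * z ^ n ≤ (1 - k)⁻¹ := by
    intro N
    induction N with
    | zero => simp only [range_zero, Finset.sum_empty]; positivity
    | succ N IH =>
      rw [Finset.sum_range_succ' (fun n => ct n * z ^ n) N]
      have h0 : ct 0 * z ^ 0 = 1 := by simp [ct_zero]
      rw [h0]
      have hterm : ∀ n : ℕ, ct (n + 1) * z ^ (n + 1)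
          = z * ∑ i ∈ range (n + 1), (ct i * z ^ i) * (ct (n - i) * z ^ (n - i)) := by
        intro n
        rw [hconvK n, pow_succ]
        ring
      have h1 : ∑ n ∈ range N, ct (n + 1) * z ^ (n + 1)
          = z * ∑ n ∈ range N, ∑ i ∈ range (n + 1), (ct i * z ^ i) * (ct (n - i) * z ^ (n - i)) := by
        rw [Finset.mul_sum]
        exact Finset.sum_congr rfl (fun n _ => hterm n)
      have h2 : ∑ n ∈ range N, ∑ i ∈ range (n + 1), (ct i * z ^ i) * (ct (n - i) * z ^ (n - i))
          ≤ (∑ i ∈ range N, ct i * z ^ i) ^ 2 :=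
        cauchy_sq_le (fun n => ct n * z ^ n) (fun n => mul_nonneg (ct_nonneg n) (hzn n)) N
      have hP0 : 0 ≤ ∑ i ∈ range N, ct i * z ^ i :=
        Finset.sum_nonneg (fun i _ => mul_nonneg (ct_nonneg i) (hzn i))
      have h3 : (∑ i ∈ range N, ct i * z ^ i) ^ 2 ≤ ((1 - k)⁻¹) ^ 2 := by
        apply pow_le_pow_left₀ hP0 IH _
      have h4 : z * ((1 - k)⁻¹) ^ 2 = k * (1 - k)⁻¹ := by
        rw [hzdef]; field_simp
      have : ∑ n ∈ range N, ct (n + 1) * z ^ (n + 1) ≤ k * (1 - k)⁻¹ := by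
        rw [h1, ← h4]
        exact mul_le_mul_of_nonneg_left (le_trans h2 h3) hz0
      have h5 : k * (1 - k)⁻¹ + 1 = (1 - k)⁻¹ := by field_simp; ring
      linarith
  have hKle : K ≤ (1 - k)⁻¹ := by
    apply le_of_tendsto' hKsummable.hasSum.tendsto_sum_nat hpartial
  -- solve quadratic for K
  have hKval : K = (1 - k)⁻¹ := by
    have hfac : (k * K - 1) * ((1 - k) * K - 1) = 0 := by
      have : z = k * (1 - k) := hzdef
      nlinarith [hquad]
    rcases mul_eq_zero.mp hfac with h | h
    · exfalso
      have hkK : k * K ≤ k * (1 - k)⁻¹ := by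
        apply mul_le_mul_of_nonneg_left hKle hk0
      have : k * (1 - k)⁻¹ < 1 := by
        have h2 : k / (1 - k) < 1 := (div_lt_one hk3).mpr (by linarith)
        rwa [div_eq_mul_inv] at h2
      linarith
    · have : (1 - k) * K = 1 := by linarith
      field_simp at this ⊢
      linarith
  -- final assembly
  have hCsum : HasSum (fun n : ℕ => cb n * z ^ n) C := hCsummable.hasSum
  have hKsum : HasSum (fun n : ℕ => ct n * z ^ n) K := hKsummable.hasSum
  have hterm : ∀ m : ℕ, (Nat.choose (2 * (m + 1) - 2) (m + 1) : ℝ) * z ^ (m + 1)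
      = z * (cb m * z ^ m) - z * (ct m * z ^ m) := by
    intro m
    have h1 : 2 * (m + 1) - 2 = 2 * m := by omega
    rw [h1]
    have hc : ((2 * m).choose (m + 1) : ℝ) = cb m - ct m := by
      have hn : (2 * m).choose (m + 1) * (m + 1) = (2 * m).choose m * (2 * m - m) :=
        Nat.choose_succ_right_eq (2 * m) m
      have hn2 : 2 * m - m = m := by omega
      rw [hn2] at hn
      have hcat : (m + 1) * catalan m = Nat.centralBinom m :=
        succ_mul_catalan_eq_centralBinom m
      have hmne : ((m : ℝ) + 1) ≠ 0 := by positivity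
      apply mul_left_cancel₀ hmne
      have hcast1 : ((2 * m).choose (m + 1) : ℝ) * ((m : ℝ) + 1) = ((2 * m).choose m : ℝ) * m := by
        exact_mod_cast congrArg (Nat.cast : ℕ → ℝ) hn
      have hcast2 : ((m : ℝ) + 1) * ct m = cb m := by
        unfold ct cb
        exact_mod_cast congrArg (Nat.cast : ℕ → ℝ) hcat
      have hcb : cb m = ((2 * m).choose m : ℝ) := by
        unfold cb; rw [Nat.centralBinom_eq_two_mul_choose]
      rw [mul_sub, hcast2, hcb]
      linarith [hcast1]
    rw [hc, pow_succ]
    ring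
  have hmain : HasSum (fun m : ℕ => (Nat.choose (2 * (m + 1) - 2) (m + 1) : ℝ) * z ^ (m + 1))
      (z * C - z * K) := by
    have h := (hCsum.mul_left z).sub (hKsum.mul_left z)
    have he : (fun m : ℕ => (Nat.choose (2 * (m + 1) - 2) (m + 1) : ℝ) * z ^ (m + 1))
        = fun m : ℕ => z * (cb m * z ^ m) - z * (ct m * z ^ m) := funext hterm
    rw [he]
    exact h
  have hfull : HasSum (fun n : ℕ => (Nat.choose (2 * n - 2) n : ℝ) * z ^ n)
      ((z * C - z * K) + ∑ i ∈ range 1, (Nat.choose (2 * i - 2) i : ℝ) * z ^ i) :=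
    (hasSum_nat_add_iff 1).mp hmain
  have h01 : ∑ i ∈ range 1, (Nat.choose (2 * i - 2) i : ℝ) * z ^ i = 1 := by simp
  rw [h01] at hfull
  have hval : (z * C - z * K) + 1 = (1 - k) ^ 2 / (1 - 2 * k) := by
    rw [hCval, hKval, hzdef]
    have h2k : (1 - 2 * k) ≠ 0 := hk2.ne'
    have e1 : (1 - 2 * k)⁻¹ * (1 - 2 * k) = 1 := inv_mul_cancel₀ h2k
    have e2 : (1 - k)⁻¹ * (1 - k) = 1 := inv_mul_cancel₀ hk3.ne'
    rw [div_eq_mul_inv]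
    linear_combination (-(1 - k)) * e1 - k * e2
  rw [← hval]
  exact hfull
end

section
/- For every real number k with 0 ≤ k < 1/2, the series Σ_{n=1}^{∞} (1/n)·binom(2n−1, n−1)·(k(1−k))ⁿ converges with sum −log(1 − k). -/
open Finset MeasureTheory intervalIntegral

private lemma centralBinom_le_four_pow (n : ℕ) : Nat.centralBinom n ≤ 4 ^ n := by
  rw [Nat.centralBinom]
  calc (2*n).choose n ≤ ∑ m ∈ range (2*n+1), (2*n).choose m :=
        Finset.single_le_sum (fun i _ => Nat.zero_le _) (Finset.mem_range.mpr (by omega))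
    _ = 2 ^ (2*n) := Nat.sum_range_choose (2*n)
    _ = 4 ^ n := by rw [pow_mul]; norm_num

private lemma key_sym (m : ℕ) :
    2 * ∑ i ∈ range (m+1), i * (Nat.centralBinom i * Nat.centralBinom (m - i))
      = m * ∑ i ∈ range (m+1), Nat.centralBinom i * Nat.centralBinom (m - i) := by
  have h := Finset.sum_range_reflect
    (fun i => i * (Nat.centralBinom i * Nat.centralBinom (m - i))) (m+1)
  rw [two_mul]
  nth_rewrite 1 [← h]
  rw [← Finset.sum_add_distrib, Finset.mul_sum]
  apply Finset.sum_congr rfl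
  intro j hj
  have hj' : j ≤ m := Nat.lt_succ_iff.mp (Finset.mem_range.mp hj)
  have h1 : m + 1 - 1 - j = m - j := by omega
  rw [h1, Nat.sub_sub_self hj']
  have h2 : (m - j) + j = m := by omega
  calc (m-j) * (Nat.centralBinom (m-j) * Nat.centralBinom j)
        + j * (Nat.centralBinom j * Nat.centralBinom (m-j))
      = ((m-j) + j) * (Nat.centralBinom j * Nat.centralBinom (m-j)) := by ring
    _ = m * (Nat.centralBinom j * Nat.centralBinom (m-j)) := by rw [h2]

private lemma centralBinom_conv (n : ℕ) :
    ∑ i ∈ range (n+1), Nat.centralBinom i * Nat.centralBinom (n - i) = 4 ^ n := by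
  induction n with
  | zero => simp [Nat.centralBinom]
  | succ n ih =>
    have hA : ∑ i ∈ range (n+2), i * (Nat.centralBinom i * Nat.centralBinom (n+1-i))
        = ∑ j ∈ range (n+1), (j+1) * (Nat.centralBinom (j+1) * Nat.centralBinom (n-j)) := by
      rw [Finset.sum_range_succ']
      simp only [Nat.zero_mul, add_zero, Nat.succ_sub_succ]
    have hrec : ∀ j : ℕ, (j+1) * (Nat.centralBinom (j+1) * Nat.centralBinom (n-j))
        = 2 * (2*j+1) * (Nat.centralBinom j * Nat.centralBinom (n-j)) := by
      intro j
      rw [← mul_assoc, Nat.succ_mul_centralBinom_succ, mul_assoc]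
    have hA2 : ∑ i ∈ range (n+2), i * (Nat.centralBinom i * Nat.centralBinom (n+1-i))
        = 4 * (∑ j ∈ range (n+1), j * (Nat.centralBinom j * Nat.centralBinom (n-j)))
          + 2 * ∑ j ∈ range (n+1), Nat.centralBinom j * Nat.centralBinom (n-j) := by
      rw [hA]
      rw [Finset.mul_sum, Finset.mul_sum, ← Finset.sum_add_distrib]
      apply Finset.sum_congr rfl
      intro j _
      rw [hrec j]; ring
    have h1 := key_sym (n+1)
    have h2 := key_sym n
    rw [ih] at h2
    have hcancel : (n+1) * (∑ i ∈ range (n+2), Nat.centralBinom i * Nat.centralBinom (n+1-i))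
        = (n+1) * (4 * 4 ^ n) := by
      rw [← h1, hA2, ih]
      have hrw : 2 * (4 * (∑ j ∈ range (n + 1),
            j * (Nat.centralBinom j * Nat.centralBinom (n - j))) + 2 * 4 ^ n)
          = 4 * (2 * ∑ j ∈ range (n + 1),
            j * (Nat.centralBinom j * Nat.centralBinom (n - j))) + 4 * 4 ^ n := by ring
      rw [hrw, h2]
      ring
    have := Nat.eq_of_mul_eq_mul_left (Nat.succ_pos n) hcancel
    rw [this]; ring

private lemma hasSum_centralBinom (t : ℝ) (ht0 : 0 ≤ t) (ht1 : t < 1/2) :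
    HasSum (fun n : ℕ => (Nat.centralBinom n : ℝ) * (t * (1 - t)) ^ n) (1 / (1 - 2*t)) := by
  set x : ℝ := t * (1 - t) with hxdef
  have hx0 : 0 ≤ x := by nlinarith
  have h2t : 0 < 1 - 2*t := by linarith
  have h4x1 : 4 * x < 1 := by nlinarith
  set f : ℕ → ℝ := fun n => (Nat.centralBinom n : ℝ) * x ^ n with hfdef
  have hfnn : ∀ n, 0 ≤ f n := fun n => by positivity
  have hble : ∀ n, f n ≤ (4*x)^n := by
    intro n
    have h := centralBinom_le_four_pow n
    calc f n ≤ (4:ℝ)^n * x^n := by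
          apply mul_le_mul_of_nonneg_right _ (pow_nonneg hx0 n)
          exact_mod_cast h
      _ = (4*x)^n := (mul_pow _ _ _).symm
  have hgeo : Summable (fun n : ℕ => (4*x)^n) :=
    summable_geometric_of_lt_one (by positivity) h4x1
  have hsum : Summable f := Summable.of_nonneg_of_le hfnn hble hgeo
  have hnorm : Summable (fun n => ‖f n‖) := by
    simpa only [Real.norm_eq_abs, abs_of_nonneg (hfnn _)] using hsum
  have hc := hasSum_sum_range_mul_of_summable_norm hnorm hnorm
  have hconv : ∀ n : ℕ, ∑ i ∈ range (n+1), f i * f (n-i) = (4*x)^n := by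
    intro n
    have : ∀ i ∈ range (n+1), f i * f (n-i)
        = (Nat.centralBinom i * Nat.centralBinom (n-i) : ℕ) * x ^ n := by
      intro i hi
      have hi' : i ≤ n := Nat.lt_succ_iff.mp (Finset.mem_range.mp hi)
      have : x ^ i * x ^ (n - i) = x ^ n := by
        rw [← pow_add]; congr 1; omega
      simp only [hfdef]
      push_cast
      rw [mul_mul_mul_comm, this]
    rw [Finset.sum_congr rfl this, ← Finset.sum_mul, ← Nat.cast_sum, centralBinom_conv,
      mul_pow (4:ℝ) x n]
    norm_num
  rw [funext hconv] at hc
  have hgeoS := hasSum_geometric_of_lt_one (r := 4*x) (by positivity) h4x1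
  have hS2 : (∑' n, f n) * (∑' n, f n) = (1 - 4*x)⁻¹ := hc.unique hgeoS
  have hsq : (1 - 4*x) = (1 - 2*t)^2 := by rw [hxdef]; ring
  have hSnn : 0 ≤ ∑' n, f n := tsum_nonneg hfnn
  have hval : (∑' n, f n) = 1 / (1 - 2*t) := by
    have h1 : (∑' n, f n) * (∑' n, f n) = (1/(1-2*t)) * (1/(1-2*t)) := by
      rw [hS2, hsq]
      field_simp
    rcases mul_self_eq_mul_self_iff.mp h1 with h | h
    · exact h
    · exfalso
      have : (0:ℝ) < 1/(1-2*t) := by positivity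
      linarith [hSnn, h]
  have := hsum.hasSum
  rwa [hval] at this

private lemma hasSum_integrand (t : ℝ) (ht0 : 0 ≤ t) (ht1 : t < 1/2) :
    HasSum (fun n : ℕ => ((Nat.centralBinom (n+1) : ℝ)/2) * (t*(1-t))^n * (1 - 2*t))
      (1/(1-t)) := by
  rcases eq_or_lt_of_le ht0 with h0 | h0
  · -- t = 0
    subst h0
    have : ∀ n : ℕ, n ≠ 0 →
        ((Nat.centralBinom (n+1) : ℝ)/2) * ((0:ℝ)*(1-0))^n * (1 - 2*0) = 0 := by
      intro n hn
      simp [zero_pow hn]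
    have h := hasSum_single (f := fun n : ℕ =>
      ((Nat.centralBinom (n+1) : ℝ)/2) * ((0:ℝ)*(1-0))^n * (1 - 2*0)) 0 this
    simpa [Nat.centralBinom] using h
  · have hx : 0 < t * (1 - t) := by nlinarith
    set x : ℝ := t * (1 - t) with hxdef
    have h2t : 0 < 1 - 2*t := by linarith
    have h1t : 0 < 1 - t := by linarith
    have h1 : HasSum (fun n : ℕ => (Nat.centralBinom n : ℝ) * x ^ n) (1/(1-2*t)) := by
      rw [hxdef]
      exact hasSum_centralBinom t ht0 ht1
    have h2 : HasSum (fun n : ℕ => (Nat.centralBinom (n+1) : ℝ) * x ^ (n+1))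
        (1/(1-2*t) - 1) := by
      refine (hasSum_nat_add_iff (f := fun n : ℕ => (Nat.centralBinom n : ℝ) * x ^ n) 1).mpr ?_
      have : (1/(1-2*t) - 1) + ∑ i ∈ range 1, (Nat.centralBinom i : ℝ) * x ^ i
          = 1/(1-2*t) := by
        simp [Nat.centralBinom]
      rw [this]
      exact h1
    have h3 := h2.mul_right ((1-2*t)/(2*x))
    have heq : (fun n : ℕ => ((Nat.centralBinom (n+1) : ℝ)/2) * x^n * (1 - 2*t))
        = fun n : ℕ => (Nat.centralBinom (n+1) : ℝ) * x ^ (n+1) * ((1-2*t)/(2*x)) := by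
      funext n
      rw [pow_succ]
      field_simp
    have hval : (1/(1-2*t) - 1) * ((1-2*t)/(2*x)) = 1/(1-t) := by
      rw [hxdef]
      field_simp
      ring
    rw [heq, ← hval]
    exact h3

private lemma integral_term (k : ℝ) (n : ℕ) :
    ∫ t in (0:ℝ)..k, ((Nat.centralBinom (n+1):ℝ)/2) * (t*(1-t))^n * (1-2*t)
      = ((Nat.centralBinom (n+1):ℝ)/(2*(n+1))) * (k*(1-k))^(n+1) := by
  have hderiv : ∀ t : ℝ, HasDerivAt
      (fun u : ℝ => ((Nat.centralBinom (n+1):ℝ)/(2*(n+1))) * (u*(1-u))^(n+1))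
      (((Nat.centralBinom (n+1):ℝ)/2) * (t*(1-t))^n * (1-2*t)) t := by
    intro t
    have h1 : HasDerivAt (fun u : ℝ => u*(1-u)) (1-2*t) t := by
      have := (hasDerivAt_id t).mul ((hasDerivAt_const t (1:ℝ)).sub (hasDerivAt_id t))
      refine this.congr_deriv ?_
      simp
      ring
    have h2 := (h1.pow (n+1)).const_mul ((Nat.centralBinom (n+1):ℝ)/(2*(n+1)))
    refine h2.congr_deriv ?_
    have hne : ((n:ℝ)+1) ≠ 0 := by positivity
    simp only [Nat.add_sub_cancel]
    push_cast
    field_simp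
  have hcont : Continuous (fun t : ℝ => ((Nat.centralBinom (n+1):ℝ)/2) * (t*(1-t))^n * (1-2*t)) := by
    continuity
  rw [intervalIntegral.integral_eq_sub_of_hasDerivAt (fun t _ => hderiv t)
    (hcont.intervalIntegrable 0 k)]
  norm_num

/-- For every real `k` with `0 ≤ k < 1/2`:
`Σ_{n≥1} (1/n)·C(2n−1, n−1)·(k(1−k))ⁿ = −log(1−k)`.
(The `n = 0` term vanishes since `1/0 = 0` in `ℝ`.) -/
theorem statement9 (k : ℝ) (hk0 : 0 ≤ k) (hk1 : k < 1 / 2) :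
    HasSum (fun n : ℕ =>
        (1 / (n : ℝ)) * (Nat.choose (2 * n - 1) (n - 1) : ℝ) * (k * (1 - k)) ^ n)
      (-Real.log (1 - k)) := by
  have h1k : 0 < 1 - k := by linarith
  have h4k : 4 * (k * (1-k)) < 1 := by nlinarith
  have hxk0 : 0 ≤ k * (1-k) := by positivity
  -- the continuous maps
  set g : ℕ → C(ℝ, ℝ) := fun n => ⟨fun t => ((Nat.centralBinom (n+1):ℝ)/2) * (t*(1-t))^n * (1-2*t),
    by continuity⟩ with hgdef
  -- summability of sup norms on [0,k]
  have hnorm_le : ∀ n : ℕ, ‖(g n).restrict (⟨Set.uIcc 0 k, isCompact_uIcc⟩ : TopologicalSpace.Compacts ℝ)‖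
      ≤ 2 * (4 * (k * (1-k)))^n := by
    intro n
    refine (ContinuousMap.norm_le _ (by positivity)).mpr ?_
    rintro ⟨t, ht⟩
    have ht2 : t ∈ Set.Icc 0 k := by rwa [← Set.uIcc_of_le hk0]
    obtain ⟨ht0, htk⟩ := ht2
    have htx : 0 ≤ t * (1-t) := by nlinarith
    have htxk : t * (1-t) ≤ k * (1-k) := by nlinarith
    have h2t : |1 - 2*t| ≤ 1 := by
      rw [abs_le]; constructor <;> nlinarith
    have hcb : (Nat.centralBinom (n+1) : ℝ) ≤ 4^(n+1) := by
      exact_mod_cast centralBinom_le_four_pow (n+1)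
    simp only [ContinuousMap.restrict_apply, hgdef, ContinuousMap.coe_mk, Real.norm_eq_abs]
    rw [abs_mul, abs_mul]
    have h1 : |(Nat.centralBinom (n+1):ℝ)/2| ≤ 4^(n+1)/2 := by
      rw [abs_of_nonneg (by positivity)]
      linarith
    have h2 : |(t*(1-t))^n| ≤ (k*(1-k))^n := by
      rw [abs_of_nonneg (by positivity)]
      exact pow_le_pow_left₀ htx htxk n
    calc |(Nat.centralBinom (n+1):ℝ)/2| * |(t*(1-t))^n| * |1-2*t|
        ≤ (4^(n+1)/2) * (k*(1-k))^n * 1 := by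
          apply mul_le_mul _ h2t (abs_nonneg _) (by positivity)
          exact mul_le_mul h1 h2 (abs_nonneg _) (by positivity)
      _ = 2 * (4 * (k * (1-k)))^n := by
          rw [mul_pow (4:ℝ) (k*(1-k)) n, pow_succ]
          ring
  have hsum_norm : Summable (fun n : ℕ =>
      ‖(g n).restrict (⟨Set.uIcc 0 k, isCompact_uIcc⟩ : TopologicalSpace.Compacts ℝ)‖) := by
    apply Summable.of_nonneg_of_le (fun n => norm_nonneg _) hnorm_le
    exact (summable_geometric_of_lt_one (by positivity) h4k).mul_left 2
  have hswap := hasSum_intervalIntegral_of_summable_norm (a := 0) (b := k) hsum_norm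
  -- identify the integral of the tsum
  have htsum_eq : Set.EqOn (fun t => ∑' n, (g n) t) (fun t => 1/(1-t)) (Set.uIcc 0 k) := by
    intro t ht
    rw [Set.uIcc_of_le hk0] at ht
    have ht1 : t < 1/2 := lt_of_le_of_lt ht.2 hk1
    exact (hasSum_integrand t ht.1 ht1).tsum_eq
  have hint_eq : (∫ t in (0:ℝ)..k, ∑' n, (g n) t) = ∫ t in (0:ℝ)..k, 1/(1-t) :=
    intervalIntegral.integral_congr htsum_eq
  -- compute ∫ 1/(1-t)
  have hlog : (∫ t in (0:ℝ)..k, 1/(1-t)) = -Real.log (1-k) := by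
    have hderiv : ∀ t ∈ Set.uIcc (0:ℝ) k, HasDerivAt (fun u : ℝ => -Real.log (1-u)) (1/(1-t)) t := by
      intro t ht
      rw [Set.uIcc_of_le hk0] at ht
      have h1t : (1:ℝ) - t ≠ 0 := by
        have : t < 1 := lt_of_le_of_lt ht.2 (by linarith)
        intro h; nlinarith
      have h := (((hasDerivAt_const t (1:ℝ)).sub (hasDerivAt_id t)).log h1t).neg
      refine h.congr_deriv ?_
      simp
      ring
    have hcont : ContinuousOn (fun t : ℝ => 1/(1-t)) (Set.uIcc 0 k) := by
      apply ContinuousOn.div continuousOn_const (by fun_prop)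
      intro t ht
      rw [Set.uIcc_of_le hk0] at ht
      have : t < 1 := lt_of_le_of_lt ht.2 (by linarith)
      intro h; nlinarith
    rw [intervalIntegral.integral_eq_sub_of_hasDerivAt hderiv
      (hcont.intervalIntegrable)]
    simp
  rw [hint_eq, hlog] at hswap
  -- compute each term integral
  have hterm : ∀ n : ℕ, (∫ t in (0:ℝ)..k, (g n) t)
      = (1 / ((n+1) : ℝ)) * (Nat.choose (2 * (n+1) - 1) ((n+1) - 1) : ℝ) * (k * (1 - k)) ^ (n+1) := by
    intro n
    have h := integral_term k n
    have hchoose : (Nat.centralBinom (n+1) : ℝ) = 2 * (Nat.choose (2*n+1) n : ℝ) := by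
      have : Nat.centralBinom (n+1) = 2 * Nat.choose (2*n+1) n := by
        rw [Nat.centralBinom]
        have he : 2 * (n+1) = (2*n+1) + 1 := by ring
        rw [he, Nat.choose_succ_succ' (2*n+1) n]
        have : (2*n+1).choose (n+1) = (2*n+1).choose n := Nat.choose_symm_half n
        omega
      exact_mod_cast this
    simp only [hgdef, ContinuousMap.coe_mk]
    rw [h, hchoose]
    have hsimp : 2 * (n+1) - 1 = 2*n+1 := by omega
    have hsimp2 : (n+1) - 1 = n := by omega
    rw [hsimp, hsimp2]
    have hne : ((n:ℝ)+1) ≠ 0 := by positivity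
    push_cast
    field_simp
  rw [funext hterm] at hswap
  -- shift index
  have h0 : (1 / ((0:ℕ) : ℝ)) * (Nat.choose (2 * 0 - 1) (0 - 1) : ℝ) * (k * (1 - k)) ^ (0:ℕ) = 0 := by
    norm_num
  rw [← hasSum_nat_add_iff' 1]
  simpa using hswap
end
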